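/- arXiv:1810.07278 — 2 statements merged into one kernel-verified Lean document; each statement's English description precedes it below -/
import Mathlib

section
/- Tower identity for the discrete gradient under a Gibbs measure: Let K₁,…,Kₙ be finite sets, λᵢ strictly positive probability measures, f : ∏Kᵢ → ℝ, and μ the Gibbs measure μ(x) ∝ e^{f(x)}∏λᵢ(xᵢ). For each x, let ξ_{∂ᵢf(x,·)} denote the Gibbs measure on Kᵢ with potential ∂ᵢf(x,·) relative to λᵢ. Then ∫ ∇f(x,x) μ(dx) = ∫∫ ∇f(x,y) ξ_{∇f(x,·)}(dy) μ(dx), where ξ_{∇f(x,·)} = ∏ᵢ ξ_{∂ᵢf(x,·)}. -/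
open Real Finset

/-- A probability mass function on a finite type. -/
def IsPMF {α : Type*} [Fintype α] (μ : α → ℝ) : Prop :=
  (∀ x, 0 ≤ μ x) ∧ ∑ x, μ x = 1

/-- Kullback–Leibler divergence. -/
noncomputable def KL {α : Type*} [Fintype α] (μ γ : α → ℝ) : ℝ :=
  ∑ x, μ x * Real.log (μ x / γ x)

/-- The Gibbs measure of the potential `f` relative to the reference measure `l`. -/
noncomputable def gibbs {α : Type*} [Fintype α] (f : α → ℝ) (l : α → ℝ) : α → ℝ :=
  fun x => Real.exp (f x) * l x / ∑ y, Real.exp (f y) * l y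

/-- Product of the measures `l i` on the product space. -/
noncomputable def prodMeas {n : ℕ} {K : Fin n → Type*} [∀ i, Fintype (K i)]
    (l : ∀ i, K i → ℝ) : (∀ i, K i) → ℝ :=
  fun x => ∏ i, l i (x i)

/-- Discrete partial derivative `∂ᵢf(x,y)` with reference points `star`. -/
noncomputable def dpart {n : ℕ} {K : Fin n → Type*} (f : (∀ i, K i) → ℝ)
    (star : ∀ i, K i) (i : Fin n) (x : ∀ j, K j) (y : K i) : ℝ :=
  f (Function.update x i y) - f (Function.update x i (star i))

/-- Discrete gradient `∇f(x,y) = Σᵢ ∂ᵢf(x,yᵢ)` with reference points `star`. -/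
noncomputable def dgrad {n : ℕ} {K : Fin n → Type*} (f : (∀ i, K i) → ℝ)
    (star : ∀ i, K i) (x y : ∀ i, K i) : ℝ :=
  ∑ i, dpart f star i x (y i)

/-- The product Gibbs measure `ξ_{∇f(x,·)} = ∏ᵢ ξ_{∂ᵢf(x,·)}` of the additively
separable potential `∇f(x,·)`. -/
noncomputable def xiGrad {n : ℕ} {K : Fin n → Type*} [∀ i, Fintype (K i)]
    (f : (∀ i, K i) → ℝ) (star : ∀ i, K i) (l : ∀ i, K i → ℝ) (x : ∀ i, K i) :
    (∀ i, K i) → ℝ :=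
  fun y => ∏ i, gibbs (dpart f star i x) (l i) (y i)

lemma gibbs_denom_pos {α : Type*} [Fintype α] [Nonempty α] (g l : α → ℝ)
    (hl : ∀ x, 0 < l x) : 0 < ∑ y, Real.exp (g y) * l y :=
  Finset.sum_pos (fun y _ => mul_pos (Real.exp_pos _) (hl y)) univ_nonempty

lemma gibbs_sum_one {α : Type*} [Fintype α] [Nonempty α] (g l : α → ℝ)
    (hl : ∀ x, 0 < l x) : ∑ y, gibbs g l y = 1 := by
  unfold gibbs
  rw [← Finset.sum_div, div_self (ne_of_gt (gibbs_denom_pos g l hl))]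

lemma dpart_update {n : ℕ} {K : Fin n → Type*} (f : (∀ i, K i) → ℝ)
    (star : ∀ i, K i) (i : Fin n) (x : ∀ j, K j) (y z : K i) :
    dpart f star i (Function.update x i y) z = dpart f star i x z := by
  unfold dpart
  rw [Function.update_idem, Function.update_idem]

lemma prodMeas_update_mul {n : ℕ} {K : Fin n → Type*} [∀ i, Fintype (K i)]
    (l : ∀ i, K i → ℝ) (x : ∀ i, K i) (i : Fin n) (y : K i) :
    prodMeas l (Function.update x i y) * l i (x i) = prodMeas l x * l i y := by
  unfold prodMeas
  rw [← Finset.mul_prod_erase univ (fun j => l j (Function.update x i y j)) (mem_univ i),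
      ← Finset.mul_prod_erase univ (fun j => l j (x j)) (mem_univ i)]
  have h : ∀ j ∈ univ.erase i, l j (Function.update x i y j) = l j (x j) := by
    intro j hj
    rw [Function.update_of_ne (Finset.ne_of_mem_erase hj)]
  rw [Finset.prod_congr rfl h, Function.update_self]
  ring

set_option maxHeartbeats 1000000 in
/-- Per-coordinate tower identity. -/
lemma coord_identity {n : ℕ} (K : Fin n → Type*)
    [∀ i, Fintype (K i)] [∀ i, Nonempty (K i)]
    (l : ∀ i, K i → ℝ) (hlpos : ∀ i x, 0 < l i x)
    (star : ∀ i, K i) (f : (∀ i, K i) → ℝ) (i : Fin n) :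
    ∑ x, gibbs f (prodMeas l) x * dpart f star i x (x i)
      = ∑ x, gibbs f (prodMeas l) x *
          ∑ y, gibbs (dpart f star i x) (l i) y * dpart f star i x y := by
  classical
  set μ := gibbs f (prodMeas l)
  set ξ := fun (x : ∀ j, K j) => gibbs (dpart f star i x) (l i)
  set F : (∀ j, K j) × K i → ℝ := fun p => μ p.1 * (ξ p.1 p.2 * dpart f star i p.1 p.2)
  -- the involution (x, y) ↦ (x[i ↦ y], x i)
  have hinv : Function.Involutive
      (fun p : (∀ j, K j) × K i => (Function.update p.1 i p.2, p.1 i)) := by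
    intro p
    simp [Function.update_idem]
  set σ := hinv.toPerm
  -- key pointwise identity
  have key : ∀ (x : ∀ j, K j) (y : K i),
      F (σ (x, y)) = μ x * (ξ x y * dpart f star i x (x i)) := by
    intro x y
    have hξ : ξ (Function.update x i y) = ξ x := by
      funext z
      simp only [ξ]
      congr 1
      funext w
      exact dpart_update f star i x y w
    have hμ : μ (Function.update x i y) * ξ x (x i) = μ x * ξ x y := by
      simp only [μ, ξ, gibbs]
      rw [div_mul_div_comm, div_mul_div_comm]
      congr 1
      have h1 : f (Function.update x i y) + dpart f star i x (x i)
          = f x + dpart f star i x y := by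
        unfold dpart
        rw [Function.update_eq_self]
        ring
      calc Real.exp (f (Function.update x i y)) * prodMeas l (Function.update x i y) *
            (Real.exp (dpart f star i x (x i)) * l i (x i))
          = Real.exp (f (Function.update x i y) + dpart f star i x (x i)) *
            (prodMeas l (Function.update x i y) * l i (x i)) := by
            rw [Real.exp_add]; ring
        _ = Real.exp (f x + dpart f star i x y) * (prodMeas l x * l i y) := by
            rw [h1, prodMeas_update_mul]
        _ = Real.exp (f x) * prodMeas l x * (Real.exp (dpart f star i x y) * l i y) := by
            rw [Real.exp_add]; ring
    show μ (Function.update x i y) * (ξ (Function.update x i y) (x i) *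
        dpart f star i (Function.update x i y) (x i))
      = μ x * (ξ x y * dpart f star i x (x i))
    rw [hξ, dpart_update]
    calc μ (Function.update x i y) * (ξ x (x i) * dpart f star i x (x i))
        = μ (Function.update x i y) * ξ x (x i) * dpart f star i x (x i) := by ring
      _ = μ x * ξ x y * dpart f star i x (x i) := by rw [hμ]
      _ = μ x * (ξ x y * dpart f star i x (x i)) := by ring
  have e1 : ∑ p : (∀ j, K j) × K i, F (σ p) = ∑ x, ∑ y, F (σ (x, y)) :=
    Fintype.sum_prod_type (f := fun p : (∀ j, K j) × K i => F (σ p))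
  have e2 : ∑ p : (∀ j, K j) × K i, F p = ∑ x, ∑ y, F (x, y) :=
    Fintype.sum_prod_type (f := F)
  have e3 : ∑ p : (∀ j, K j) × K i, F (σ p) = ∑ p : (∀ j, K j) × K i, F p :=
    Equiv.sum_comp σ F
  calc ∑ x, μ x * dpart f star i x (x i)
      = ∑ x, ∑ y, μ x * (ξ x y * dpart f star i x (x i)) := by
        refine Finset.sum_congr rfl fun x _ => ?_
        rw [← Finset.mul_sum, ← Finset.sum_mul, gibbs_sum_one _ _ (hlpos i), one_mul]
    _ = ∑ x, ∑ y, F (σ (x, y)) := by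
        refine Finset.sum_congr rfl fun x _ => Finset.sum_congr rfl fun y _ => ?_
        rw [key]
    _ = ∑ x, ∑ y, F (x, y) := by rw [← e1, e3, e2]
    _ = ∑ x, μ x * ∑ y, ξ x y * dpart f star i x y := by
        refine Finset.sum_congr rfl fun x _ => ?_
        rw [Finset.mul_sum]

/-- Expectation of `∇f(x,·)` under the product Gibbs measure splits coordinatewise. -/
lemma expect_dgrad {n : ℕ} (K : Fin n → Type*)
    [∀ i, Fintype (K i)] [∀ i, Nonempty (K i)]
    (l : ∀ i, K i → ℝ) (hlpos : ∀ i x, 0 < l i x)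
    (star : ∀ i, K i) (f : (∀ i, K i) → ℝ) (x : ∀ i, K i) :
    ∑ y, xiGrad f star l x y * dgrad f star x y
      = ∑ i, ∑ y, gibbs (dpart f star i x) (l i) y * dpart f star i x y := by
  classical
  unfold xiGrad dgrad
  simp_rw [Finset.mul_sum]
  rw [Finset.sum_comm]
  refine Finset.sum_congr rfl fun j _ => ?_
  set G : ∀ i, K i → ℝ := fun i z => gibbs (dpart f star i x) (l i) z *
    Function.update (fun i (_ : K i) => (1 : ℝ)) j (dpart f star j x) i z with hGdef
  have hG : ∀ y : ∀ i, K i,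
      (∏ i, gibbs (dpart f star i x) (l i) (y i)) * dpart f star j x (y j)
        = ∏ i, G i (y i) := by
    intro y
    rw [hGdef]
    rw [Finset.prod_mul_distrib]
    congr 1
    rw [Finset.prod_eq_single j
      (fun b _ hb => by rw [Function.update_of_ne hb])
      (fun h => absurd (mem_univ j) h)]
    rw [Function.update_self]
  simp_rw [hG]
  rw [← Fintype.piFinset_univ, ← Finset.prod_univ_sum]
  rw [Finset.prod_eq_single j ?_ (fun h => absurd (mem_univ j) h)]
  · simp only [G, Function.update_self]
  · intro b _ hb
    simp only [G, Function.update_of_ne hb]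
    simp only [mul_one]
    exact gibbs_sum_one _ _ (hlpos b)

/-- Tower identity for the discrete gradient under a Gibbs measure:
`∫ ∇f(x,x) μ(dx) = ∫∫ ∇f(x,y) ξ_{∇f(x,·)}(dy) μ(dx)`. -/
theorem tower_identity {n : ℕ} (K : Fin n → Type*)
    [∀ i, Fintype (K i)] [∀ i, Nonempty (K i)]
    (l : ∀ i, K i → ℝ) (hl : ∀ i, IsPMF (l i)) (hlpos : ∀ i x, 0 < l i x)
    (star : ∀ i, K i) (f : (∀ i, K i) → ℝ) :
    (∑ x, gibbs f (prodMeas l) x * dgrad f star x x)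
      = ∑ x, gibbs f (prodMeas l) x *
          ∑ y, xiGrad f star l x y * dgrad f star x y := by
  calc ∑ x, gibbs f (prodMeas l) x * dgrad f star x x
      = ∑ i, ∑ x, gibbs f (prodMeas l) x * dpart f star i x (x i) := by
        unfold dgrad
        simp_rw [Finset.mul_sum]
        rw [Finset.sum_comm]
    _ = ∑ i, ∑ x, gibbs f (prodMeas l) x *
          ∑ y, gibbs (dpart f star i x) (l i) y * dpart f star i x y :=
        Finset.sum_congr rfl fun i _ => coord_identity K l hlpos star f i
    _ = ∑ x, ∑ i, gibbs f (prodMeas l) x *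
          ∑ y, gibbs (dpart f star i x) (l i) y * dpart f star i x y :=
        Finset.sum_comm
    _ = ∑ x, gibbs f (prodMeas l) x *
          ∑ y, xiGrad f star l x y * dgrad f star x y := by
        refine Finset.sum_congr rfl fun x _ => ?_
        rw [expect_dgrad K l hlpos star f x, Finset.mul_sum]
end

section
/- DTC of a Gibbs measure: with K₁,…,Kₙ finite, λᵢ strictly positive, f : ∏Kᵢ → ℝ, and μ the Gibbs measure of f, we have DTC(μ) = ∫ D(ξ_{∇f(x,·)} ‖ λ₁×⋯×λₙ) μ(dx) - D(μ ‖ λ₁×⋯×λₙ), where ξ_{∇f(x,·)} is the product Gibbs measure with the additively separable potential ∇f(x,·). -/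
open Real Finset

/-- Shannon entropy of a probability mass function. -/
noncomputable def ent {α : Type*} [Fintype α] (μ : α → ℝ) : ℝ :=
  -∑ x, μ x * Real.log (μ x)

/-- Glue a value `y` in coordinate `i` to a configuration `z` of the remaining coordinates. -/
def glue {n : ℕ} {K : Fin n → Type*} (i : Fin n)
    (z : (j : {j : Fin n // j ≠ i}) → K j.1) (y : K i) : ∀ j, K j :=
  fun j => if h : j = i then cast (congrArg K h.symm) y else z ⟨j, h⟩

/-- Marginal of a measure on `∏ j, K j` on the coordinates other than `i`. -/
noncomputable def margRest {n : ℕ} {K : Fin n → Type*} [∀ i, Fintype (K i)]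
    (μ : (∀ j, K j) → ℝ) (i : Fin n) : ((j : {j : Fin n // j ≠ i}) → K j.1) → ℝ :=
  fun z => ∑ y : K i, μ (glue i z y)

/-- Dual total correlation: `DTC(μ) = H(μ) - Σᵢ H_μ(xᵢ | x_{[n]∖i})`, where the
conditional entropy is `H(μ) - H(margRest μ i)`. -/
noncomputable def DTC {n : ℕ} {K : Fin n → Type*} [∀ i, Fintype (K i)]
    (μ : (∀ j, K j) → ℝ) : ℝ :=
  ent μ - ∑ i, (ent μ - ent (margRest μ i))

/-! Under `μ ∝ e^f ∏ λᵢ` the conditional law of `xᵢ` given the other coordinates of `x` is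
`ξ_{∂ᵢf(x,·)}`: the normalisation absorbs both `f(x^{i→*ᵢ})` and the factors `λⱼ(xⱼ)`, `j ≠ i`.
Hence `ξ_{∇f(x,·)}` is the product of these conditional laws, and its divergence from `∏ λᵢ`
is the sum of their divergences from the `λᵢ`. Averaged over `μ`, the `i`-th summand is
`-H_μ(xᵢ | x_{[n]∖i}) - E_μ log λᵢ(xᵢ)`, while `D(μ ‖ ∏ λᵢ) = -H(μ) - E_μ log ∏ λᵢ(xᵢ)`;
the reference terms cancel in the difference, leaving `DTC(μ)`. -/

section Glue

variable {n : ℕ} {K : Fin n → Type*}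

lemma glue_eq_piSplitAt_symm (i : Fin n) (z : (j : {j : Fin n // j ≠ i}) → K j.1) (y : K i) :
    glue i z y = (Equiv.piSplitAt i K).symm (y, z) := by
  funext j
  by_cases h : j = i
  · subst h; rfl
  · simp [glue, Equiv.piSplitAt, h]

lemma update_glue (i : Fin n) (z : (j : {j : Fin n // j ≠ i}) → K j.1) (y y' : K i) :
    Function.update (glue i z y') i y = glue i z y := by
  funext j
  by_cases h : j = i
  · subst h; simp [glue]
  · simp [glue, h]

lemma sum_eq_sum_sum_glue [∀ i, Fintype (K i)] (i : Fin n) (h : (∀ j, K j) → ℝ) :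
    ∑ x, h x = ∑ z, ∑ y : K i, h (glue i z y) := by
  rw [← (Equiv.piSplitAt i K).symm.sum_comp, Fintype.sum_prod_type, Finset.sum_comm]
  simp_rw [glue_eq_piSplitAt_symm]

end Glue

section Conditional

variable {n : ℕ} {K : Fin n → Type*} [∀ i, Fintype (K i)]

/-- The conditional law of `xᵢ` given `x_{[n]∖i}` under `μ`. -/
noncomputable def condRest (μ : (∀ j, K j) → ℝ) (i : Fin n) (x : ∀ j, K j) : K i → ℝ :=
  fun y => μ (Function.update x i y) / ∑ w, μ (Function.update x i w)

lemma condRest_update (μ : (∀ j, K j) → ℝ) (i : Fin n) (x : ∀ j, K j) (y : K i) :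
    condRest μ i (Function.update x i y) = condRest μ i x := by
  funext w
  simp only [condRest, Function.update_idem]

lemma condRest_glue (μ : (∀ j, K j) → ℝ) (i : Fin n) (z : (j : {j : Fin n // j ≠ i}) → K j.1)
    (y w : K i) : condRest μ i (glue i z y) w = μ (glue i z w) / margRest μ i z := by
  simp only [condRest, update_glue, margRest]

lemma sum_update_pos {μ : (∀ j, K j) → ℝ} (hμ : ∀ x, 0 < μ x) (i : Fin n) (x : ∀ j, K j) :
    0 < ∑ w, μ (Function.update x i w) :=
  Finset.sum_pos (fun _ _ => hμ _) ⟨x i, Finset.mem_univ _⟩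

lemma sum_mul_sum_condRest_mul {μ : (∀ j, K j) → ℝ} (hμ : ∀ x, 0 < μ x) (i : Fin n)
    (φ : (∀ j, K j) → ℝ) :
    ∑ x, μ x * ∑ w, condRest μ i x w * φ (Function.update x i w) = ∑ x, μ x * φ x := by
  rw [sum_eq_sum_sum_glue i, sum_eq_sum_sum_glue i]
  refine Finset.sum_congr rfl fun z _ => ?_
  simp_rw [condRest_glue, update_glue, ← Finset.sum_mul]
  rw [← margRest, Finset.mul_sum]
  refine Finset.sum_congr rfl fun w _ => ?_
  have hm : 0 < margRest μ i z := Finset.sum_pos (fun _ _ => hμ _) ⟨w, Finset.mem_univ _⟩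
  field_simp

lemma sum_mul_log_sum_update (μ : (∀ j, K j) → ℝ) (i : Fin n) :
    ∑ x, μ x * Real.log (∑ w, μ (Function.update x i w)) = -ent (margRest μ i) := by
  rw [ent, neg_neg, sum_eq_sum_sum_glue i]
  simp_rw [update_glue, ← Finset.sum_mul]
  rfl

lemma sum_mul_KL_condRest {μ : (∀ j, K j) → ℝ} (hμ : ∀ x, 0 < μ x) (i : Fin n)
    {q : K i → ℝ} (hq : ∀ y, 0 < q y) :
    ∑ x, μ x * KL (condRest μ i x) q
      = ent (margRest μ i) - ent μ - ∑ x, μ x * Real.log (q (x i)) := by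
  have hKL : ∀ x, KL (condRest μ i x) q = ∑ w, condRest μ i x w
      * Real.log (condRest μ i (Function.update x i w) (Function.update x i w i)
        / q (Function.update x i w i)) := fun x => by
    simp only [KL, condRest_update, Function.update_self]
  have hlog : ∀ x, Real.log (condRest μ i x (x i) / q (x i)) = Real.log (μ x)
      - Real.log (∑ w, μ (Function.update x i w)) - Real.log (q (x i)) := fun x => by
    have hm := sum_update_pos hμ i x
    rw [condRest, Function.update_eq_self, Real.log_div (div_pos (hμ x) hm).ne' (hq _).ne',
      Real.log_div (hμ x).ne' hm.ne']
  simp_rw [hKL, sum_mul_sum_condRest_mul hμ i fun x => Real.log (condRest μ i x (x i) / q (x i)),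
    hlog, mul_sub, Finset.sum_sub_distrib, sum_mul_log_sum_update, ent]
  ring

end Conditional

section Gibbs

variable {α : Type*} [Fintype α]

lemma gibbs_pos {l : α → ℝ} (hl : ∀ x, 0 < l x) (g : α → ℝ) (x : α) : 0 < gibbs g l x :=
  div_pos (mul_pos (Real.exp_pos _) (hl x))
    (Finset.sum_pos (fun y _ => mul_pos (Real.exp_pos _) (hl y)) ⟨x, Finset.mem_univ _⟩)

lemma sum_gibbs [Nonempty α] {l : α → ℝ} (hl : ∀ x, 0 < l x) (g : α → ℝ) :
    ∑ x, gibbs g l x = 1 := by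
  unfold gibbs
  rw [← Finset.sum_div]
  exact div_self
    (Finset.sum_pos (fun y _ => mul_pos (Real.exp_pos _) (hl y)) Finset.univ_nonempty).ne'

lemma gibbs_eq_div_sum_of_eq_mul {μ : α → ℝ} {c : ℝ} (hc : c ≠ 0) (g l : α → ℝ)
    (hμ : ∀ x, μ x = c * (Real.exp (g x) * l x)) :
    gibbs g l = fun x => μ x / ∑ y, μ y := by
  funext x
  simp only [gibbs, hμ, ← Finset.mul_sum, mul_div_mul_left _ _ hc]

end Gibbs

section Product

variable {n : ℕ} {K : Fin n → Type*} [∀ i, Fintype (K i)]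

lemma prodMeas_update (l : ∀ i, K i → ℝ) (x : ∀ i, K i) (i : Fin n) (y : K i) :
    prodMeas l (Function.update x i y) = l i y * ∏ j : {j // j ≠ i}, l j (x j) := by
  rw [prodMeas, Fintype.prod_eq_mul_prod_subtype_ne _ i, Function.update_self]
  congr 1
  exact Finset.prod_congr rfl fun j _ => by rw [Function.update_of_ne j.2]

lemma gibbs_dpart_eq_condRest {l : ∀ i, K i → ℝ} (hl : ∀ i y, 0 < l i y)
    (f : (∀ i, K i) → ℝ) (star : ∀ i, K i) (i : Fin n) (x : ∀ i, K i) :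
    gibbs (dpart f star i x) (l i) = condRest (gibbs f (prodMeas l)) i x := by
  have hZ : 0 < ∑ y, Real.exp (f y) * prodMeas l y := Finset.sum_pos
    (fun y _ => mul_pos (Real.exp_pos _) (Finset.prod_pos fun i _ => hl i (y i)))
    ⟨x, Finset.mem_univ _⟩
  have hW : 0 < ∏ j : {j // j ≠ i}, l j (x j) := Finset.prod_pos fun j _ => hl j (x j)
  refine gibbs_eq_div_sum_of_eq_mul (c := Real.exp (f (Function.update x i (star i)))
    * (∏ j : {j // j ≠ i}, l j (x j)) / ∑ y, Real.exp (f y) * prodMeas l y)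
    (by positivity) _ _ fun y => ?_
  rw [gibbs, dpart, prodMeas_update, Real.exp_sub]
  field_simp

lemma sum_prodMeas_mul {p : ∀ i, K i → ℝ} (hp : ∀ i, ∑ y, p i y = 1) (i : Fin n)
    (r : K i → ℝ) :
    ∑ x, prodMeas p x * r (x i) = ∑ y, p i y * r y := by
  set p' := Function.update p i (fun y => p i y * r y)
  have hp'i : p' i = fun y => p i y * r y := Function.update_self ..
  have hp'ne : ∀ j : {j // j ≠ i}, p' j = p j := fun j => Function.update_of_ne j.2 ..
  have hprod : ∀ x : ∀ j, K j, prodMeas p x * r (x i) = ∏ j, p' j (x j) := fun x => by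
    rw [prodMeas, Fintype.prod_eq_mul_prod_subtype_ne _ i,
      Fintype.prod_eq_mul_prod_subtype_ne (fun j => p' j (x j)) i]
    simp only [hp'i, hp'ne]
    ring
  simp_rw [hprod, ← Fintype.prod_sum, Fintype.prod_eq_mul_prod_subtype_ne _ i, hp'i, hp'ne, hp,
    Finset.prod_const_one, mul_one]

lemma KL_prodMeas {p q : ∀ i, K i → ℝ} (hp : ∀ i, ∑ y, p i y = 1) (hp0 : ∀ i y, p i y ≠ 0)
    (hq0 : ∀ i y, q i y ≠ 0) :
    KL (prodMeas p) (prodMeas q) = ∑ i, KL (p i) (q i) := by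
  have hlog : ∀ x : ∀ i, K i, Real.log (prodMeas p x / prodMeas q x)
      = ∑ i, Real.log (p i (x i) / q i (x i)) := fun x => by
    rw [prodMeas, prodMeas, ← Finset.prod_div_distrib,
      Real.log_prod fun i _ => div_ne_zero (hp0 i _) (hq0 i _)]
  simp_rw [KL, hlog, Finset.mul_sum]
  rw [Finset.sum_comm]
  exact Finset.sum_congr rfl fun i _ => sum_prodMeas_mul hp i fun y => Real.log (p i y / q i y)

end Product

lemma KL_eq_neg_ent_sub {α : Type*} [Fintype α] {μ γ : α → ℝ} (hμ : ∀ x, μ x ≠ 0)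
    (hγ : ∀ x, γ x ≠ 0) : KL μ γ = -ent μ - ∑ x, μ x * Real.log (γ x) := by
  rw [KL, ent, neg_neg, ← Finset.sum_sub_distrib]
  exact Finset.sum_congr rfl fun x _ => by rw [Real.log_div (hμ x) (hγ x), mul_sub]

theorem DTC_of_gibbs_general {n : ℕ} (K : Fin n → Type*)
    [∀ i, Fintype (K i)] [∀ i, Nonempty (K i)]
    (l : ∀ i, K i → ℝ) (hlpos : ∀ i x, 0 < l i x)
    (star : ∀ i, K i) (f : (∀ i, K i) → ℝ) :
    DTC (gibbs f (prodMeas l))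
      = (∑ x, gibbs f (prodMeas l) x * KL (xiGrad f star l x) (prodMeas l))
        - KL (gibbs f (prodMeas l)) (prodMeas l) := by
  set μ := gibbs f (prodMeas l)
  have hprod : ∀ x, 0 < prodMeas l x := fun x => Finset.prod_pos fun i _ => hlpos i (x i)
  have hμ : ∀ x, 0 < μ x := gibbs_pos hprod f
  have hξ : ∀ x, KL (xiGrad f star l x) (prodMeas l) = ∑ i, KL (condRest μ i x) (l i) := by
    intro x
    simp only [μ, ← gibbs_dpart_eq_condRest hlpos f star]
    exact KL_prodMeas (fun i => sum_gibbs (hlpos i) _)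
      (fun i => (gibbs_pos (hlpos i) _ · |>.ne')) fun i y => (hlpos i y).ne'
  have hlog : ∀ x, Real.log (prodMeas l x) = ∑ i, Real.log (l i (x i)) := fun x =>
    Real.log_prod fun i _ => (hlpos i (x i)).ne'
  have hexp : ∑ x, μ x * KL (xiGrad f star l x) (prodMeas l)
      = ∑ i, (ent (margRest μ i) - ent μ) - ∑ x, μ x * Real.log (prodMeas l x) := by
    simp_rw [hξ, Finset.mul_sum, hlog, Finset.mul_sum]
    rw [Finset.sum_comm, Finset.sum_comm (f := fun x i => μ x * Real.log (l i (x i))),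
      ← Finset.sum_sub_distrib]
    exact Finset.sum_congr rfl fun i _ => sum_mul_KL_condRest hμ i (hlpos i)
  rw [hexp, KL_eq_neg_ent_sub (fun x => (hμ x).ne') fun x => (hprod x).ne', DTC,
    Finset.sum_sub_distrib, Finset.sum_sub_distrib]
  ring

/-- DTC of a Gibbs measure:
`DTC(μ) = ∫ D(ξ_{∇f(x,·)} ‖ λ₁×⋯×λₙ) μ(dx) - D(μ ‖ λ₁×⋯×λₙ)`. -/
theorem DTC_of_gibbs {n : ℕ} (K : Fin n → Type*)
    [∀ i, Fintype (K i)] [∀ i, Nonempty (K i)]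
    (l : ∀ i, K i → ℝ) (hl : ∀ i, IsPMF (l i)) (hlpos : ∀ i x, 0 < l i x)
    (star : ∀ i, K i) (f : (∀ i, K i) → ℝ) :
    DTC (gibbs f (prodMeas l))
      = (∑ x, gibbs f (prodMeas l) x * KL (xiGrad f star l x) (prodMeas l))
        - KL (gibbs f (prodMeas l)) (prodMeas l) :=
  DTC_of_gibbs_general K l hlpos star f
end
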